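/- Let α, β, γ > 0, μ ∈ ℝ and r ≠ 0. Let x̂₀ = −γμ/β be the threshold receivers would use under full disclosure when the sender is known to be uninformed. Then there exists a signal realization y ∈ ℝ such that Π(x̂₀, y) > Π(x̂(y), y), where x̂(y) = −(αy + γμ)/β. (Full information revelation is not incentive compatible whenever there are externalities: some sender type strictly prefers to conceal her signal.) -/

import Mathlib

open MeasureTheory

/-- Gaussian density of `N(m, v)` evaluated at `t`. -/
noncomputable def phi (t m v : ℝ) : ℝ :=
  (2 * Real.pi * v) ^ (-(1:ℝ)/2) * Real.exp (-(t - m)^2 / (2*v))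

/-- Gaussian cumulative distribution function of `N(m, v)` evaluated at `t`. -/
noncomputable def Phi (t m v : ℝ) : ℝ := ∫ s in Set.Iic t, phi s m v

lemma phi_pos (t m v : ℝ) (hv : 0 < v) : 0 < phi t m v := by
  unfold phi
  positivity

lemma continuous_phi (m v : ℝ) : Continuous (fun t => phi t m v) := by
  unfold phi
  fun_prop

lemma hasDerivAt_phi (t m v : ℝ) (hv : 0 < v) :
    HasDerivAt (fun t => phi t m v) ((-(t - m)/v) * phi t m v) t := by
  unfold phi
  have h : HasDerivAt (fun t : ℝ => -(t - m)^2 / (2*v)) (-(t-m)/v) t := by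
    have h0 := (((hasDerivAt_id t).sub_const m).pow 2).neg.div_const (2*v)
    refine h0.congr_deriv ?_
    simp only [id]
    norm_num
    ring
  have h3 := (h.exp).const_mul ((2 * Real.pi * v) ^ (-(1:ℝ)/2))
  have heq : ((-(t - m)/v) * ((2 * Real.pi * v) ^ (-(1:ℝ)/2) * Real.exp (-(t - m)^2 / (2*v))))
      = (2 * Real.pi * v) ^ (-(1:ℝ)/2) * (Real.exp (-(t - m)^2 / (2*v)) * (-(t-m)/v)) := by
    ring
  rw [heq]
  exact h3

lemma integrable_phi (m v : ℝ) (hv : 0 < v) : Integrable (fun t => phi t m v) := by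
  have hb : 0 < 1/(2*v) := by positivity
  have h1 : Integrable (fun t : ℝ => Real.exp (-(1/(2*v)) * t^2)) :=
    integrable_exp_neg_mul_sq hb
  have h2 := (h1.comp_sub_right m).const_mul ((2 * Real.pi * v) ^ (-(1:ℝ)/2))
  have heq : (fun t : ℝ => (2 * Real.pi * v) ^ (-(1:ℝ)/2) * Real.exp (-(1/(2*v)) * (t - m)^2))
      = fun t => phi t m v := by
    funext t
    unfold phi
    congr 2
    field_simp
  rw [← heq]
  exact h2

lemma Phi_sub (a b m v : ℝ) (hv : 0 < v) :
    Phi b m v - Phi a m v = ∫ t in a..b, phi t m v := by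
  unfold Phi
  exact intervalIntegral.integral_Iic_sub_Iic ((integrable_phi m v hv).integrableOn)
    ((integrable_phi m v hv).integrableOn)

lemma phi_sub (a b m v : ℝ) (hv : 0 < v) :
    phi b m v - phi a m v = ∫ t in a..b, (-(t - m)/v) * phi t m v := by
  refine (intervalIntegral.integral_eq_sub_of_hasDerivAt
    (fun t _ => hasDerivAt_phi t m v hv) ?_).symm
  exact (Continuous.mul (by fun_prop) (continuous_phi m v)).intervalIntegrable a b

lemma pay_diff (p k a b m v : ℝ) (hv : 0 < v) :
    (p * (1 - Phi b m v) + k * phi b m v) - (p * (1 - Phi a m v) + k * phi a m v)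
      = ∫ t in a..b, (-p - k * (t - m)/v) * phi t m v := by
  have h1 := Phi_sub a b m v hv
  have h2 := phi_sub a b m v hv
  have hInt : IntervalIntegrable (fun t => phi t m v) volume a b :=
    (continuous_phi m v).intervalIntegrable a b
  have hInt2 : IntervalIntegrable (fun t => (-(t - m)/v) * phi t m v) volume a b :=
    (Continuous.mul (by fun_prop) (continuous_phi m v)).intervalIntegrable a b
  have : (∫ t in a..b, (-p - k * (t - m)/v) * phi t m v)
      = -p * (∫ t in a..b, phi t m v) + k * ∫ t in a..b, (-(t - m)/v) * phi t m v := by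
    rw [← intervalIntegral.integral_const_mul, ← intervalIntegral.integral_const_mul,
      ← intervalIntegral.integral_add (hInt.const_mul _) (hInt2.const_mul _)]
    congr 1
    funext t
    ring
  rw [this, ← h1, ← h2]
  ring

/-- Full information revelation is not incentive compatible whenever `r ≠ 0`:
some sender type `y` strictly prefers the no-information threshold `x̂₀ = −γμ/β`
to the full-disclosure threshold `x̂(y)`. -/
theorem full_disclosure_not_IC (α β γ : ℝ) (hα : 0 < α) (hβ : 0 < β) (hγ : 0 < γ)
    (μ r : ℝ) (hr : r ≠ 0) :
    let θb : ℝ → ℝ := fun y => (α*y + γ*μ)/(α + γ)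
    let V : ℝ := 1/β + 1/(α + γ)
    let Pay : ℝ → ℝ → ℝ := fun x y =>
      (r + θb y) * (1 - Phi x (θb y) V) + (1/(α + γ)) * phi x (θb y) V
    let xhat : ℝ → ℝ := fun y => -(α*y + γ*μ)/β
    let xhat0 : ℝ := -(γ*μ)/β
    ∃ y : ℝ, Pay xhat0 y > Pay (xhat y) y := by
  intro θb V Pay xhat xhat0
  have hsum : (0:ℝ) < α + γ := by linarith
  have hV : 0 < V := by
    show (0:ℝ) < 1/β + 1/(α + γ)
    positivity
  set y : ℝ := -r * V * (α + γ) * β / (2*α) with hy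
  set k : ℝ := 1/(α + γ) with hk
  set m : ℝ := θb y with hm
  set a : ℝ := xhat y with ha
  set b : ℝ := xhat0 with hb
  have hba : b - a = -r * V * (α + γ) / 2 := by
    show -(γ*μ)/β - (-(α*y + γ*μ)/β) = _
    rw [hy]
    field_simp
    ring
  refine ⟨y, ?_⟩
  show (r + m) * (1 - Phi b m V) + k * phi b m V >
       (r + m) * (1 - Phi a m V) + k * phi a m V
  rw [gt_iff_lt, ← sub_pos, pay_diff (r + m) k a b m V hV]
  have hkey : ∀ t : ℝ, (-(r + m) - k * (t - m)/V) = -r - k * (t - a)/V := by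
    intro t
    have hma : a - m = -(α*y + γ*μ) * V := by
      show -(α*y + γ*μ)/β - (α*y + γ*μ)/(α + γ) = _
      show _ = -(α*y + γ*μ) * (1/β + 1/(α + γ))
      ring
    have hmval : m = (α*y + γ*μ)/(α + γ) := rfl
    have : k * (a - m)/V = -m := by
      rw [hma, hmval, hk]
      field_simp
    have h2 : k * (t - m)/V = k * (t - a)/V + k * (a - m)/V := by ring
    rw [h2, this]; ring
  have hcong : (fun t => (-(r + m) - k * (t - m)/V) * phi t m V)
      = fun t => (-r - k * (t - a)/V) * phi t m V := by
    funext t; rw [hkey t]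
  rw [hcong]
  have hcont : Continuous (fun t => (-r - k * (t - a)/V) * phi t m V) :=
    Continuous.mul (by fun_prop) (continuous_phi m V)
  have hkpos : 0 < k := by rw [hk]; positivity
  have hkV : 0 < k/V := div_pos hkpos hV
  have hhalf : (k/V) * (b - a) = -r/2 := by
    rw [hba, hk]
    show 1/(α + γ) / V * (-r * V * (α + γ) / 2) = -r/2
    field_simp
  rcases lt_or_gt_of_ne hr with hrneg | hrpos
  · -- r < 0 : a < b
    have hab : a < b := by nlinarith [mul_pos (neg_pos.mpr hrneg) (mul_pos hV hsum)]
    apply intervalIntegral.intervalIntegral_pos_of_pos_on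
      (hcont.intervalIntegrable a b) _ hab
    intro t ht
    apply mul_pos _ (phi_pos t m V hV)
    have h1 : (k/V) * (t - a) < (k/V) * (b - a) :=
      mul_lt_mul_of_pos_left (by linarith [ht.2]) hkV
    have h2 : k * (t - a)/V = (k/V) * (t - a) := by ring
    linarith
  · -- r > 0 : b < a
    have hab : b < a := by nlinarith [mul_pos hrpos (mul_pos hV hsum)]
    have hswap : (∫ t in a..b, (-r - k * (t - a)/V) * phi t m V)
        = ∫ t in b..a, -((-r - k * (t - a)/V) * phi t m V) := by
      rw [intervalIntegral.integral_neg, ← intervalIntegral.integral_symm]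
    rw [hswap]
    apply intervalIntegral.intervalIntegral_pos_of_pos_on
      (hcont.neg.intervalIntegrable b a) _ hab
    intro t ht
    have hphi := phi_pos t m V hV
    have h1 : (k/V) * (b - a) < (k/V) * (t - a) :=
      mul_lt_mul_of_pos_left (by linarith [ht.1]) hkV
    have h2 : k * (t - a)/V = (k/V) * (t - a) := by ring
    have h3 : -r - k * (t - a)/V < 0 := by linarith
    have : -((-r - k * (t - a)/V) * phi t m V) = (r + k * (t - a)/V) * phi t m V := by ring
    show 0 < -((-r - k * (t - a)/V) * phi t m V); rw [this]
    apply mul_pos _ hphi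
    linarith
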